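/- arXiv:2401.01785 — 5 statements merged into one kernel-verified Lean document; each statement's English description precedes it below -/
import Mathlib

section
/- There exists a Lie algebra L over the field with two elements 𝔽₂ such that [x,y,z,z] = 0 for all x, y, z ∈ L (in particular L satisfies the 3-Engel identity [x,y,y,y] = 0 for all x, y ∈ L), and L is not nilpotent. -/
/-!
Let `K = 𝔽₂[X₀, X₁, …]` act on itself through the derivations `∑ cᵢ ∂/∂Xᵢ`, `c : ℕ → 𝔽₂`, and let
`L = K ⋊ (ℕ → 𝔽₂)` be the semidirect sum, both factors abelian. Every bracket lands in `K`, so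
`[x,y,z,z] = D²m` for some such derivation `D`. In characteristic two `D²` obeys the Leibniz rule
(the cross term is `2 Dp Dq`) and kills the variables, hence `D² = 0`. On the other hand every
polynomial `p` equals `∂/∂Xⱼ (Xⱼ p)` for a variable `Xⱼ` not occurring in `p`, so `K` lies in
every term of the lower central series.
-/

attribute [local instance] LieRing.ofAssociativeRing

instance CommRing.isLieAbelian (A : Type*) [CommRing A] : IsLieAbelian A :=
  isMulCommutative_iff_isLieAbelian.mp inferInstance

namespace LieDerivation

variable {R K L : Type*} [CommRing R] [LieRing K] [LieAlgebra R K] [IsLieAbelian K]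
  [LieRing L] [LieAlgebra R L] [IsLieAbelian L]

def lieHomOfCommute (ρ : L →ₗ[R] Module.End R K) (hρ : ∀ a b, Commute (ρ a) (ρ b)) :
    L →ₗ⁅R⁆ LieDerivation R K K where
  toFun a := ⟨ρ a, fun _ _ => by simp [trivial_lie_zero]⟩
  map_add' a b := by ext; simp
  map_smul' t a := by ext; simp only [map_smul]; rfl
  map_lie' {a b} := by
    ext m
    simp [trivial_lie_zero, ← Module.End.mul_apply, (hρ a b).eq]

end LieDerivation

namespace LieAlgebra.SemiDirectSum

variable {R K L : Type*} [CommRing R] [LieRing K] [LieAlgebra R K] [LieRing L] [LieAlgebra R L]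
  {ψ : L →ₗ⁅R⁆ LieDerivation R K K}

lemma lie_lie_lie_eq_zero_of_sq_eq_zero [IsLieAbelian K] [IsLieAbelian L]
    (hψ : ∀ a m, ψ a (ψ a m) = 0) (x y z : K ⋊⁅ψ⁆ L) : ⁅⁅⁅x, y⁆, z⁆, z⁆ = 0 := by
  simp only [lie_eq_mk, trivial_lie_zero, map_zero, LieDerivation.zero_apply, zero_add, zero_sub,
    map_sub, map_neg, hψ, sub_zero, neg_zero, zero_eq_mk]

lemma inl_mem_lowerCentralSeries (hψ : ∀ m, ∃ a m', ψ a m' = m) (k : ℕ) (m : K) :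
    inl ψ m ∈ LieModule.lowerCentralSeries R (K ⋊⁅ψ⁆ L) (K ⋊⁅ψ⁆ L) k := by
  induction k generalizing m with
  | zero => exact LieSubmodule.mem_top _
  | succ k ih =>
    obtain ⟨a, m', rfl⟩ := hψ m
    have : inl ψ (ψ a m') = ⁅inr ψ a, inl ψ m'⁆ := by ext <;> simp
    rw [this, LieModule.lowerCentralSeries_succ]
    exact LieSubmodule.lie_mem_lie (LieSubmodule.mem_top _) (ih m')

lemma lowerCentralSeries_ne_bot [Nontrivial K] (hψ : ∀ m, ∃ a m', ψ a m' = m) (k : ℕ) :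
    LieModule.lowerCentralSeries R (K ⋊⁅ψ⁆ L) (K ⋊⁅ψ⁆ L) k ≠ ⊥ := by
  obtain ⟨m, hm⟩ := exists_ne (0 : K)
  intro h
  have hmem := inl_mem_lowerCentralSeries hψ k m
  rw [h, LieSubmodule.mem_bot] at hmem
  exact hm (inl_injective ψ (by simpa using hmem))

end LieAlgebra.SemiDirectSum

namespace MvPolynomial

variable {σ R : Type*} [CommRing R]

noncomputable def directionalDeriv (c : σ → R) :
    Derivation R (MvPolynomial σ R) (MvPolynomial σ R) :=
  mkDerivation R fun i => C (c i)

@[simp]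
lemma directionalDeriv_X (c : σ → R) (i : σ) : directionalDeriv c (X i) = C (c i) :=
  mkDerivation_X R _ i

lemma directionalDeriv_comm (c d : σ → R) (p : MvPolynomial σ R) :
    directionalDeriv c (directionalDeriv d p) = directionalDeriv d (directionalDeriv c p) := by
  have : ⁅directionalDeriv c, directionalDeriv d⁆ = 0 :=
    derivation_ext fun i => by simp [Derivation.commutator_apply, derivation_C]
  rw [← sub_eq_zero, ← Derivation.commutator_apply, this, Derivation.zero_apply]

lemma directionalDeriv_directionalDeriv_self [CharP R 2] (c : σ → R) (p : MvPolynomial σ R) :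
    directionalDeriv c (directionalDeriv c p) = 0 := by
  induction p using MvPolynomial.induction_on with
  | C a => simp [derivation_C]
  | add p q hp hq => simp [hp, hq]
  | mul_X p i hp =>
    simp only [Derivation.leibniz, directionalDeriv_X, map_add, smul_eq_mul, hp, derivation_C,
      mul_zero, zero_add]
    rw [mul_comm]
    exact CharTwo.add_self_eq_zero _

lemma exists_directionalDeriv_eq [Infinite σ] (p : MvPolynomial σ R) :
    ∃ c q, directionalDeriv c q = p := by
  classical
  obtain ⟨j, hj⟩ := Infinite.exists_notMem_finset p.vars
  have hp : directionalDeriv (Pi.single j 1) p = 0 :=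
    derivation_eq_zero_of_forall_mem_vars fun i hi => by
      simp [show i ≠ j from fun h => hj (h ▸ hi)]
  exact ⟨Pi.single j 1, X j * p, by simp [Derivation.leibniz, hp]⟩

noncomputable def directionalDerivₗ : (σ → R) →ₗ[R] Module.End R (MvPolynomial σ R) where
  toFun c := directionalDeriv c
  map_add' c d := by
    have : directionalDeriv (c + d) = directionalDeriv c + directionalDeriv d :=
      derivation_ext fun i => by simp
    ext p; simp [this]
  map_smul' t c := by
    have : directionalDeriv (t • c) = t • directionalDeriv c :=
      derivation_ext fun i => by simp [smul_eq_C_mul]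
    ext p; simp [this]

noncomputable def directionalDerivLieHom :
    (σ → R) →ₗ⁅R⁆ LieDerivation R (MvPolynomial σ R) (MvPolynomial σ R) :=
  LieDerivation.lieHomOfCommute directionalDerivₗ fun c d =>
    LinearMap.ext (directionalDeriv_comm c d)

end MvPolynomial

open LieAlgebra.SemiDirectSum MvPolynomial

/-- There is a non-nilpotent Lie algebra `L` over `𝔽₂` satisfying the identity
`[x,y,z,z] = 0` (and in particular the 3-Engel identity `[x,y,y,y] = 0`). -/
theorem exists_nonNilpotent_threeEngel_char_two :
    ∃ (L : Type) (_ : LieRing L) (_ : LieAlgebra (ZMod 2) L),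
      (∀ x y z : L, ⁅⁅⁅x, y⁆, z⁆, z⁆ = 0) ∧
      (∀ x y : L, ⁅⁅⁅x, y⁆, y⁆, y⁆ = 0) ∧
      ¬ ∃ c : ℕ, LieModule.lowerCentralSeries (ZMod 2) L L c = ⊥ := by
  have engel (x y z : MvPolynomial ℕ (ZMod 2) ⋊⁅directionalDerivLieHom⁆ (ℕ → ZMod 2)) :
      ⁅⁅⁅x, y⁆, z⁆, z⁆ = 0 :=
    lie_lie_lie_eq_zero_of_sq_eq_zero directionalDeriv_directionalDeriv_self x y z
  refine ⟨_, inferInstance, inferInstance, engel, fun x y => engel x y y, ?_⟩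
  rintro ⟨c, hc⟩
  exact lowerCentralSeries_ne_bot exists_directionalDeriv_eq c hc
end

section
/- There exists a Lie algebra L over the field with three elements 𝔽₃ that satisfies the 4-Engel identity [x,y,y,y,y] = 0 for all x, y ∈ L and is not nilpotent. -/
/-!
Let `K = R[X_i : i ∈ σ]` with `R` of prime characteristic `p`, and let `D` be the `R`-span of the
partial derivatives `∂_i`, an abelian Lie algebra of derivations of `K`. Every `∂_i` satisfies
`∂_i ^ p = 0`, because `p ∣ n (n - 1) ⋯ (n - p + 1)`, and the `p`-th power map is additive on
commuting operators, so `δ ^ p = 0` for all `δ ∈ D`. In the semidirect sum `K ⋊ D` of the two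
abelian Lie algebras, `⁅x, y⁆` lies in `K`, on which `⁅·, y⁆` acts as `-δ` for `δ` the `D`-part
of `y`; hence `K ⋊ D` is `(p + 1)`-Engel. It is not nilpotent when `σ` is infinite: for `j ∉ S`,
`∏_{i ∈ S} X_i = ∂_j (∏_{i ∈ S ∪ {j}} X_i)`, so all squarefree monomials, `1` among them, lie in
every term of the lower central series.
-/

namespace MvPolynomial

variable {σ R : Type*} [CommSemiring R]

theorem coeff_iterate_pderiv (i : σ) (n : ℕ) (f : MvPolynomial σ R) (m : σ →₀ ℕ) :
    coeff m ((pderiv i)^[n] f) =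
      coeff (m + Finsupp.single i n) f * ((m i + n).descFactorial n : R) := by
  induction n generalizing f with
  | zero => simp
  | succ n ih =>
    rw [Function.iterate_succ_apply, ih, coeff_pderiv, ← add_assoc (m i),
      Nat.succ_descFactorial_succ]
    simp only [Finsupp.add_apply, Finsupp.single_eq_same, add_assoc, ← Finsupp.single_add]
    push_cast
    ring

theorem iterate_pderiv_eq_zero_of_charP (p : ℕ) [CharP R p] (hp : p ≠ 0) (i : σ)
    (f : MvPolynomial σ R) : (pderiv i)^[p] f = 0 := by
  ext m
  rw [coeff_iterate_pderiv, coeff_zero, (CharP.cast_eq_zero_iff R p _).2, mul_zero]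
  exact (Nat.dvd_factorial (Nat.pos_of_ne_zero hp) le_rfl).trans
    (Nat.factorial_dvd_descFactorial _ _)

theorem pderiv_prod_X_eq_zero {i : σ} {s : Finset σ} (hi : i ∉ s) :
    pderiv i (∏ j ∈ s, X j : MvPolynomial σ R) = 0 := by
  classical
  induction s using Finset.induction_on with
  | empty => simp
  | insert k s hk ih =>
    obtain ⟨hik, his⟩ : i ≠ k ∧ i ∉ s := by simpa [not_or] using hi
    rw [Finset.prod_insert hk, pderiv_mul, pderiv_X_of_ne hik.symm, ih his, zero_mul, mul_zero,
      add_zero]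

theorem pderiv_prod_X_insert [DecidableEq σ] {i : σ} {s : Finset σ} (hi : i ∉ s) :
    pderiv i (∏ j ∈ insert i s, X j : MvPolynomial σ R) = ∏ j ∈ s, X j := by
  rw [Finset.prod_insert hi, pderiv_mul, pderiv_X_self, one_mul, pderiv_prod_X_eq_zero hi,
    mul_zero, add_zero]

theorem pderiv_pderiv_comm {R : Type*} [CommRing R] (i j : σ) (f : MvPolynomial σ R) :
    pderiv i (pderiv j f) = pderiv j (pderiv i f) := by
  classical
  have hij : ⁅pderiv i, pderiv j⁆ = (0 : Derivation R (MvPolynomial σ R) (MvPolynomial σ R)) :=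
    derivation_ext fun k => by
      rw [Derivation.commutator_apply]
      simp [Pi.single_apply, apply_ite]
  rw [← sub_eq_zero, ← Derivation.commutator_apply, hij, Derivation.zero_apply]

end MvPolynomial

namespace LieModule

variable {R L M : Type*} [CommRing R] [LieRing L] [LieAlgebra R L] [AddCommGroup M] [Module R M]
  [LieRingModule L M]

theorem subset_lowerCentralSeries_of_forall_exists_lie {T : Set M}
    (hT : ∀ m ∈ T, ∃ x : L, ∃ m' ∈ T, ⁅x, m'⁆ = m) (k : ℕ) :
    T ⊆ lowerCentralSeries R L M k := by
  induction k with
  | zero => simp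
  | succ k ih =>
    intro m hm
    obtain ⟨x, m', hm', rfl⟩ := hT m hm
    rw [lowerCentralSeries_succ]
    exact LieSubmodule.lie_mem_lie (LieSubmodule.mem_top x) (ih hm')

end LieModule

namespace LieAlgebra.SemiDirectSum

variable {R K L : Type*} [CommRing R] [LieRing K] [LieAlgebra R K] [LieRing L] [LieAlgebra R L]
  [IsLieAbelian K] {ψ : L →ₗ⁅R⁆ LieDerivation R K K}

theorem iterate_lie_mk_zero (y : K ⋊⁅ψ⁆ L) (k : ℕ) (a : K) :
    (⁅·, y⁆)^[k] (⟨a, 0⟩ : K ⋊⁅ψ⁆ L) = ⟨((-(ψ y.right : Module.End R K)) ^ k) a, 0⟩ := by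
  induction k generalizing a with
  | zero => simp
  | succ k ih =>
    rw [Function.iterate_succ_apply, pow_succ, Module.End.mul_apply, ← ih]
    congr 1
    ext <;> simp [trivial_lie_zero]

theorem iterate_lie_eq_zero_of_pow_eq_zero [IsLieAbelian L] {n : ℕ} (x y : K ⋊⁅ψ⁆ L)
    (h : (ψ y.right : Module.End R K) ^ n = 0) : (⁅·, y⁆)^[n + 1] x = 0 := by
  have hxy : ⁅x, y⁆ = ⟨ψ x.right y.left - ψ y.right x.left, 0⟩ := by
    ext <;> simp [trivial_lie_zero]
  rw [Function.iterate_succ_apply, hxy, iterate_lie_mk_zero, neg_pow, h, mul_zero]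
  rfl

end LieAlgebra.SemiDirectSum

namespace MvPolynomial

noncomputable section

variable (σ R : Type*) [CommRing R]

attribute [local instance] LieRing.ofAssociativeRing LieAlgebra.ofAssociativeAlgebra

instance : IsLieAbelian (MvPolynomial σ R) := isMulCommutative_iff_isLieAbelian.1 inferInstance

def pderivLie (i : σ) : LieDerivation R (MvPolynomial σ R) (MvPolynomial σ R) where
  toLinearMap := (pderiv i).toLinearMap
  leibniz' a b := by simp [trivial_lie_zero]

def constCoeffDerivations :
    LieSubalgebra R (LieDerivation R (MvPolynomial σ R) (MvPolynomial σ R)) :=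
  LieSubalgebra.lieSpan R _ (Set.range (pderivLie σ R))

instance : IsLieAbelian (constCoeffDerivations σ R) := by
  refine LieSubalgebra.isLieAbelian_lieSpan_iff.2 ?_
  rintro _ ⟨i, rfl⟩ _ ⟨j, rfl⟩
  refine LieDerivation.ext fun f => ?_
  rw [LieDerivation.lie_apply]
  exact sub_eq_zero.2 (pderiv_pderiv_comm i j f)

abbrev ConstCoeffDerivationSum : Type _ :=
  MvPolynomial σ R ⋊⁅(constCoeffDerivations σ R).incl⁆ constCoeffDerivations σ R

variable {σ R}

theorem commute_of_mem_constCoeffDerivations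
    {D E : LieDerivation R (MvPolynomial σ R) (MvPolynomial σ R)}
    (hD : D ∈ constCoeffDerivations σ R) (hE : E ∈ constCoeffDerivations σ R) :
    Commute (D : Module.End R (MvPolynomial σ R)) E := by
  have hDE : ⁅D, E⁆ = 0 :=
    congrArg Subtype.val (trivial_lie_zero _ _ (⟨D, hD⟩ : constCoeffDerivations σ R) ⟨E, hE⟩)
  refine LinearMap.ext fun f => ?_
  show D (E f) = E (D f)
  rw [← sub_eq_zero, ← LieDerivation.lie_apply, hDE, LieDerivation.zero_apply]

theorem pow_eq_zero_of_mem_constCoeffDerivations (p : ℕ) [CharP R p] [Fact p.Prime]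
    {D : LieDerivation R (MvPolynomial σ R) (MvPolynomial σ R)}
    (hD : D ∈ constCoeffDerivations σ R) : (D : Module.End R (MvPolynomial σ R)) ^ p = 0 := by
  have hp : p ≠ 0 := (Fact.out : p.Prime).ne_zero
  have : CharP (Module.End R (MvPolynomial σ R)) p :=
    Module.charP_end ⟨1, by ext r; simp [Ideal.mem_torsionOf_iff, smul_eq_C_mul]⟩
  induction hD using LieSubalgebra.lieSpan_induction with
  | mem _ h =>
    obtain ⟨i, rfl⟩ := h
    exact LinearMap.ext fun f => by
      rw [Module.End.pow_apply]
      exact iterate_pderiv_eq_zero_of_charP p hp i f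
  | zero => exact zero_pow hp
  | add D E hD hE ihD ihE =>
    rw [LieDerivation.coe_add_linearMap,
      add_pow_char_of_commute _ (commute_of_mem_constCoeffDerivations hD hE), ihD, ihE, add_zero]
  | smul r D _ ih => rw [LieDerivation.coe_smul_linearMap, smul_pow, ih, smul_zero]
  | lie D E hD hE _ _ =>
    rw [LieDerivation.commutator_coe_linear_map,
      commute_iff_lie_eq.1 (commute_of_mem_constCoeffDerivations hD hE), zero_pow hp]

theorem iterate_lie_eq_zero_of_charP (p : ℕ) [CharP R p] [Fact p.Prime]
    (x y : ConstCoeffDerivationSum σ R) : (⁅·, y⁆)^[p + 1] x = 0 :=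
  LieAlgebra.SemiDirectSum.iterate_lie_eq_zero_of_pow_eq_zero x y
    (pow_eq_zero_of_mem_constCoeffDerivations p y.right.2)

theorem lowerCentralSeries_constCoeffDerivationSum_ne_bot [Infinite σ] [Nontrivial R] (k : ℕ) :
    LieModule.lowerCentralSeries R (ConstCoeffDerivationSum σ R) (ConstCoeffDerivationSum σ R) k
      ≠ ⊥ := by
  classical
  let T : Set (ConstCoeffDerivationSum σ R) := Set.range fun s : Finset σ => ⟨∏ j ∈ s, X j, 0⟩
  have hT : ∀ m ∈ T, ∃ x : ConstCoeffDerivationSum σ R, ∃ m' ∈ T, ⁅x, m'⁆ = m := by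
    rintro _ ⟨s, rfl⟩
    obtain ⟨i, hi⟩ := Infinite.exists_notMem_finset s
    refine ⟨⟨0, ⟨pderivLie σ R i, LieSubalgebra.subset_lieSpan ⟨i, rfl⟩⟩⟩, _,
      ⟨insert i s, rfl⟩, ?_⟩
    ext : 1
    · simpa [pderivLie] using pderiv_prod_X_insert (R := R) hi
    · simp
  intro h
  have h1 : (⟨1, 0⟩ : ConstCoeffDerivationSum σ R) ∈ LieModule.lowerCentralSeries R _ _ k :=
    LieModule.subset_lowerCentralSeries_of_forall_exists_lie hT k ⟨∅, by simp⟩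
  rw [h, LieSubmodule.mem_bot] at h1
  simpa using congrArg LieAlgebra.SemiDirectSum.left h1

end

end MvPolynomial

/-- There is a non-nilpotent Lie algebra `L` over `𝔽₃` satisfying the 4-Engel identity
`[x,y,y,y,y] = 0`. -/
theorem exists_nonNilpotent_fourEngel_char_three :
    ∃ (L : Type) (_ : LieRing L) (_ : LieAlgebra (ZMod 3) L),
      (∀ x y : L, ⁅⁅⁅⁅x, y⁆, y⁆, y⁆, y⁆ = 0) ∧
      ¬ ∃ c : ℕ, LieModule.lowerCentralSeries (ZMod 3) L L c = ⊥ := by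
  have : Fact (Nat.Prime 3) := ⟨Nat.prime_three⟩
  exact ⟨MvPolynomial.ConstCoeffDerivationSum ℕ (ZMod 3), _, _,
    MvPolynomial.iterate_lie_eq_zero_of_charP 3,
    fun ⟨c, hc⟩ => MvPolynomial.lowerCentralSeries_constCoeffDerivationSum_ne_bot c hc⟩
end

section
/- Let G be any group and let x, y, z ∈ G. Then the element [xy, z, z, z, z, z] · ([x,z,z,z,z,z] · [x,z,y,z,z,z,z] · [y,z,z,z,z,z])⁻¹ lies in γ_8(H), where H is the subgroup of G generated by x, y, z; that is, [xy,z,z,z,z,z] ≡ [x,z,z,z,z,z][x,z,y,z,z,z,z][y,z,z,z,z,z] modulo γ_8(H). -/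
/-- The commutator `[a,b] = a⁻¹ b⁻¹ a b`. -/
def gc {G : Type*} [Group G] (a b : G) : G := a⁻¹ * b⁻¹ * a * b

/-!
By `[ab, c] = [a,c]·[a,c,b]·[b,c]` it remains to push the four outer commutations with `z`
through this product. Every cross term produced along the way is a commutator whose entries
have total weight at least `8`, so it vanishes modulo `γ₈` because `[γᵢ, γⱼ] ≤ γᵢ₊ⱼ`, which
follows from the three subgroups lemma by induction on `j`. One works in `H/γ₈(H)` and pulls back.
-/

namespace Subgroup

variable {G : Type*} [Group G]

theorem commutator_commutator_le_of_rotate {A B C N : Subgroup G} [N.Normal]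
    (h₁ : ⁅⁅B, C⁆, A⁆ ≤ N) (h₂ : ⁅⁅C, A⁆, B⁆ ≤ N) : ⁅⁅A, B⁆, C⁆ ≤ N := by
  have key : ∀ {X Y Z : Subgroup G}, ⁅⁅X, Y⁆, Z⁆ ≤ N ↔
      ⁅⁅X.map (QuotientGroup.mk' N), Y.map (QuotientGroup.mk' N)⁆,
        Z.map (QuotientGroup.mk' N)⁆ = ⊥ := by
    intro X Y Z
    rw [← map_commutator, ← map_commutator, map_eq_bot_iff, QuotientGroup.ker_mk']
  rw [key]
  exact commutator_commutator_eq_bot_of_rotate (key.mp h₁) (key.mp h₂)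

theorem commutator_lowerCentralSeries_le (i j : ℕ) :
    ⁅(⊤ : Subgroup G).lowerCentralSeries i, (⊤ : Subgroup G).lowerCentralSeries j⁆ ≤
      (⊤ : Subgroup G).lowerCentralSeries (i + j + 1) := by
  induction j generalizing i with
  | zero => rfl
  | succ j ih =>
    rw [commutator_comm, lowerCentralSeries_succ]
    refine commutator_commutator_le_of_rotate ?_ ?_
    · calc ⁅⁅⊤, (⊤ : Subgroup G).lowerCentralSeries i⁆, (⊤ : Subgroup G).lowerCentralSeries j⁆
          = ⁅(⊤ : Subgroup G).lowerCentralSeries (i + 1),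
              (⊤ : Subgroup G).lowerCentralSeries j⁆ := by
            rw [commutator_comm ⊤, lowerCentralSeries_succ]
        _ ≤ _ := (ih (i + 1)).trans_eq (by congr 1; omega)
    · exact commutator_mono (ih i) le_rfl

theorem lowerCentralSeries_quotient_lowerCentralSeries_eq_bot (k : ℕ) :
    (⊤ : Subgroup (G ⧸ (⊤ : Subgroup G).lowerCentralSeries k)).lowerCentralSeries k = ⊥ := by
  rw [← map_top_of_surjective _ (QuotientGroup.mk'_surjective _), ← map_lowerCentralSeries,
    map_eq_bot_iff, QuotientGroup.ker_mk']

end Subgroup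

section

variable {G : Type*} [Group G]

-- Mathlib's lower central series starts at `0`: `γ k` is `γ_{k+1}` in the usual numbering.
local notation "γ" => Subgroup.lowerCentralSeries (⊤ : Subgroup G)

open scoped commutatorElement in
theorem gc_eq_commutatorElement (a b : G) : gc a b = ⁅a⁻¹, b⁻¹⁆ := by
  simp [gc, commutatorElement_def]

theorem gc_mem_lowerCentralSeries {i j : ℕ} {a b : G} (ha : a ∈ γ i) (hb : b ∈ γ j) :
    gc a b ∈ γ (i + j + 1) := by
  rw [gc_eq_commutatorElement]
  exact Subgroup.commutator_lowerCentralSeries_le i j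
    (Subgroup.commutator_mem_commutator (inv_mem ha) (inv_mem hb))

theorem gc_mem_lowerCentralSeries_succ {i : ℕ} {a : G} (ha : a ∈ γ i) (c : G) :
    gc a c ∈ γ (i + 1) :=
  gc_mem_lowerCentralSeries (j := 0) ha (Subgroup.mem_top c)

theorem gc_mul (a b c : G) : gc (a * b) c = gc a c * gc (gc a c) b * gc b c := by
  simp only [gc]; group

theorem map_gc {H : Type*} [Group H] (φ : G →* H) (a b : G) :
    φ (gc a b) = gc (φ a) (φ b) := by
  simp [gc]

theorem map_iterate_gc {H : Type*} [Group H] (φ : G →* H) (c a : G) (n : ℕ) :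
    φ ((gc · c)^[n] a) = (gc · (φ c))^[n] (φ a) := by
  induction n with
  | zero => rfl
  | succ n ih => simp only [Function.iterate_succ_apply', map_gc, ih]

theorem iterate_gc_mem_lowerCentralSeries (c : G) {i : ℕ} {a : G} (ha : a ∈ γ i) (n : ℕ) :
    (gc · c)^[n] a ∈ γ (i + n) := by
  induction n with
  | zero => exact ha
  | succ n ih =>
    rw [Function.iterate_succ_apply', ← add_assoc]
    exact gc_mem_lowerCentralSeries_succ ih c

theorem iterate_gc_mul_of_le {k : ℕ} (hk : γ (k + 1) = ⊥) (c : G) (n : ℕ) :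
    ∀ {i j : ℕ} {a b : G}, a ∈ γ i → b ∈ γ j → k ≤ i + j + n →
      (gc · c)^[n] (a * b) = (gc · c)^[n] a * (gc · c)^[n] b := by
  induction n with
  | zero => intros; rfl
  | succ n ih =>
    intro i j a b ha hb hn
    have hac : gc a c ∈ γ (i + 1) := gc_mem_lowerCentralSeries_succ ha c
    have hbc : gc b c ∈ γ (j + 1) := gc_mem_lowerCentralSeries_succ hb c
    have hacb : gc (gc a c) b ∈ γ (i + 1 + j + 1) := gc_mem_lowerCentralSeries hac hb
    have hacb_trivial : (gc · c)^[n] (gc (gc a c) b) = 1 := by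
      have := Subgroup.lowerCentralSeries_antitone ⊤ (by omega : k + 1 ≤ i + 1 + j + 1 + n)
        (iterate_gc_mem_lowerCentralSeries c hacb n)
      rwa [hk, Subgroup.mem_bot] at this
    have hrest : gc (gc a c) b * gc b c ∈ γ (j + 1) :=
      mul_mem (Subgroup.lowerCentralSeries_antitone ⊤ (by omega) hacb) hbc
    simp only [Function.iterate_succ_apply]
    rw [gc_mul, mul_assoc, ih hac hrest (by omega), ih hacb hbc (by omega), hacb_trivial,
      one_mul]

theorem iterate_gc_mul_eq {n : ℕ} (hn : γ (n + 3) = ⊥) (a b c : G) :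
    (gc · c)^[n + 1] (a * b) =
      (gc · c)^[n + 1] a * (gc · c)^[n] (gc (gc a c) b) * (gc · c)^[n + 1] b := by
  have hac : gc a c ∈ γ 1 := gc_mem_lowerCentralSeries_succ (Subgroup.mem_top a) c
  have hbc : gc b c ∈ γ 1 := gc_mem_lowerCentralSeries_succ (Subgroup.mem_top b) c
  have hacb : gc (gc a c) b ∈ γ 2 := gc_mem_lowerCentralSeries_succ hac b
  have hrest : gc (gc a c) b * gc b c ∈ γ 1 :=
    mul_mem (Subgroup.lowerCentralSeries_antitone ⊤ (by omega) hacb) hbc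
  simp only [Function.iterate_succ_apply]
  rw [gc_mul, mul_assoc, iterate_gc_mul_of_le hn c n hac hrest (by omega),
    iterate_gc_mul_of_le hn c n hacb hbc (by omega), mul_assoc]

theorem iterate_gc_mul_mem_lowerCentralSeries (n : ℕ) (a b c : G) :
    (gc · c)^[n + 1] (a * b) *
      ((gc · c)^[n + 1] a * (gc · c)^[n] (gc (gc a c) b) * (gc · c)^[n + 1] b)⁻¹ ∈ γ (n + 3) := by
  rw [← QuotientGroup.eq_one_iff, ← QuotientGroup.mk'_apply, map_mul, map_inv, mul_inv_eq_one]
  simp only [map_iterate_gc, map_mul, map_gc]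
  exact iterate_gc_mul_eq (Subgroup.lowerCentralSeries_quotient_lowerCentralSeries_eq_bot _) _ _ _

end

/-- In any group `G`, for `x, y, z ∈ G`, one has
`[xy,z,z,z,z,z] ≡ [x,z,z,z,z,z]·[x,z,y,z,z,z,z]·[y,z,z,z,z,z]` modulo `γ₈(H)`,
where `H = ⟨x, y, z⟩`. -/
theorem commutator_expansion_mod_gamma8
    (G : Type*) [Group G] (x y z : G) :
    gc (gc (gc (gc (gc (x * y) z) z) z) z) z *
      (gc (gc (gc (gc (gc x z) z) z) z) z *
        gc (gc (gc (gc (gc (gc x z) y) z) z) z) z *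
        gc (gc (gc (gc (gc y z) z) z) z) z)⁻¹ ∈
      ((⊤ : Subgroup (Subgroup.closure ({x, y, z} : Set G))).lowerCentralSeries 7).map
        (Subgroup.closure ({x, y, z} : Set G)).subtype := by
  set H := Subgroup.closure ({x, y, z} : Set G)
  have hx : x ∈ H := Subgroup.subset_closure (by simp)
  have hy : y ∈ H := Subgroup.subset_closure (by simp)
  have hz : z ∈ H := Subgroup.subset_closure (by simp)
  have key := iterate_gc_mul_mem_lowerCentralSeries 4 (⟨x, hx⟩ : H) ⟨y, hy⟩ ⟨z, hz⟩
  exact ⟨_, key, rfl⟩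
end

section
/- If L is a Lie algebra over a field of characteristic 11 satisfying the identity [y, x, x, x_1, x_2, x_3, x_4, x_5, x_6, x_7, x_8, x_9] = 0 (left-normed) for all y, x, x_1, ..., x_9 ∈ L, then L is nilpotent of class at most 11, i.e., γ_12(L) = 0. -/
section Aux

variable (F : Type*) [Field F] (L : Type*) [LieRing L] [LieAlgebra F L]

/-- `JnAux n` is the set of `z` killed by every `n`-fold right bracketing. -/
def JnAux : ℕ → LieSubmodule F L L
  | 0 => ⊥
  | (n+1) =>
    { carrier := {z | ∀ x : L, ⁅z, x⁆ ∈ JnAux n}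
      add_mem' := fun {a b} ha hb x => by
        rw [add_lie]; exact add_mem (ha x) (hb x)
      zero_mem' := fun x => by rw [zero_lie]; exact zero_mem _
      smul_mem' := fun t a ha x => by
        rw [smul_lie]; exact Submodule.smul_mem _ _ (ha x)
      lie_mem := fun {w z} hz x => by
        rw [lie_lie]
        exact sub_mem ((JnAux n).lie_mem (hz x)) (hz ⁅w, x⁆) }

variable {F L}

lemma mem_JnAux_succ {n : ℕ} {z : L} :
    z ∈ JnAux F L (n+1) ↔ ∀ x : L, ⁅z, x⁆ ∈ JnAux F L n := Iff.rfl

lemma lie_top_JnAux_le (n : ℕ) :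
    ⁅(⊤ : LieIdeal F L), JnAux F L (n+1)⁆ ≤ JnAux F L n := by
  rw [LieSubmodule.lie_le_iff]
  intro x _ m hm
  rw [← lie_skew]
  exact neg_mem (mem_JnAux_succ.mp hm x)

lemma JnAux_zero : JnAux F L 0 = ⊥ := rfl

end Aux

/-- If a Lie algebra `L` over a field of characteristic 11 satisfies the left-normed identity
`[y, x, x, x₁, …, x₉] = 0`, then `L` is nilpotent of class at most 11, i.e. `γ₁₂(L) = 0`. -/
theorem identity_implies_class_le_eleven_char_eleven
    (F : Type*) [Field F] [CharP F 11]
    (L : Type*) [LieRing L] [LieAlgebra F L]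
    (hid : ∀ y x x₁ x₂ x₃ x₄ x₅ x₆ x₇ x₈ x₉ : L,
      ⁅⁅⁅⁅⁅⁅⁅⁅⁅⁅⁅y, x⁆, x⁆, x₁⁆, x₂⁆, x₃⁆, x₄⁆, x₅⁆, x₆⁆, x₇⁆, x₈⁆, x₉⁆ = 0) :
    LieModule.lowerCentralSeries F L L 11 = ⊥ := by
  have three_ne : (3 : F) ≠ 0 := by
    intro h
    have h11 : (11 : ℕ) ∣ 3 := (CharP.cast_eq_zero_iff F 11 3).mp (by exact_mod_cast h)
    omega
  -- the key element-level lemma: any left-normed bracket of a `γ₃` element with 9 more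
  -- elements vanishes
  have key : ∀ a b c x₁ x₂ x₃ x₄ x₅ x₆ x₇ x₈ x₉ : L,
      ⁅⁅⁅⁅⁅⁅⁅⁅⁅⁅⁅a, b⁆, c⁆, x₁⁆, x₂⁆, x₃⁆, x₄⁆, x₅⁆, x₆⁆, x₇⁆, x₈⁆, x₉⁆ = 0 := by
    intro a b c x₁ x₂ x₃ x₄ x₅ x₆ x₇ x₈ x₉
    set f : L → L := fun z => ⁅⁅⁅⁅⁅⁅⁅⁅⁅z, x₁⁆, x₂⁆, x₃⁆, x₄⁆, x₅⁆, x₆⁆, x₇⁆, x₈⁆, x₉⁆ with hf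
    show f ⁅⁅a, b⁆, c⁆ = 0
    have f_add : ∀ u v : L, f (u + v) = f u + f v := by
      intro u v; simp only [hf, add_lie]
    have f_neg : ∀ u : L, f (-u) = - f u := by
      intro u; simp only [hf, neg_lie]
    have f_zero : f (0 : L) = 0 := by simp only [hf, zero_lie]
    have fs : ∀ y x : L, f ⁅⁅y, x⁆, x⁆ = 0 := fun y x => hid y x x₁ x₂ x₃ x₄ x₅ x₆ x₇ x₈ x₉
    -- linearization of the Engel-type relation: `f` is alternating in the last two slots
    have A : ∀ y u v : L, f ⁅⁅y, u⁆, v⁆ = - f ⁅⁅y, v⁆, u⁆ := by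
      intro y u v
      have h0 := fs y (u + v)
      have hexp : ⁅⁅y, u+v⁆, u+v⁆ = ⁅⁅y,u⁆,u⁆ + (⁅⁅y,u⁆,v⁆ + (⁅⁅y,v⁆,u⁆ + ⁅⁅y,v⁆,v⁆)) := by
        simp only [lie_add, add_lie]; abel
      rw [hexp, f_add, f_add, f_add, fs, fs, zero_add, add_zero] at h0
      exact eq_neg_of_add_eq_zero_left h0
    -- alternating in the first two slots (exactly)
    have B : ∀ y u v : L, f ⁅⁅y, u⁆, v⁆ = - f ⁅⁅u, y⁆, v⁆ := by
      intro y u v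
      have h1 : ⁅⁅y, u⁆, v⁆ = -⁅⁅u, y⁆, v⁆ := by
        rw [show ⁅y, u⁆ = -⁅u, y⁆ from (lie_skew y u).symm, neg_lie]
      rw [h1, f_neg]
    -- Jacobi
    have J0 : f ⁅⁅a, b⁆, c⁆ + f ⁅⁅b, c⁆, a⁆ + f ⁅⁅c, a⁆, b⁆ = 0 := by
      have t1 : ⁅⁅a, b⁆, c⁆ = ⁅a, ⁅b, c⁆⁆ - ⁅b, ⁅a, c⁆⁆ := lie_lie a b c
      have t2 : ⁅⁅b, c⁆, a⁆ = -⁅b, ⁅a, c⁆⁆ + ⁅c, ⁅a, b⁆⁆ := by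
        rw [lie_lie, show ⁅c, a⁆ = -⁅a, c⁆ from (lie_skew c a).symm,
          show ⁅b, a⁆ = -⁅a, b⁆ from (lie_skew b a).symm, lie_neg, lie_neg]
        abel
      have t3 : ⁅⁅c, a⁆, b⁆ = ⁅c, ⁅a, b⁆⁆ + ⁅a, ⁅b, c⁆⁆ := by
        rw [lie_lie, show ⁅c, b⁆ = -⁅b, c⁆ from (lie_skew c b).symm, lie_neg]
        abel
      have hPQR : ⁅a, ⁅b, c⁆⁆ - ⁅b, ⁅a, c⁆⁆ + ⁅c, ⁅a, b⁆⁆ = 0 := by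
        rw [← lie_lie, show ⁅⁅a, b⁆, c⁆ = -⁅c, ⁅a, b⁆⁆ from (lie_skew ⁅a, b⁆ c).symm.trans rfl]
        abel
      have hjac : ⁅⁅a, b⁆, c⁆ + ⁅⁅b, c⁆, a⁆ + ⁅⁅c, a⁆, b⁆ = 0 := by
        rw [t1, t2, t3,
          show ⁅a, ⁅b, c⁆⁆ - ⁅b, ⁅a, c⁆⁆ + (-⁅b, ⁅a, c⁆⁆ + ⁅c, ⁅a, b⁆⁆) +
              (⁅c, ⁅a, b⁆⁆ + ⁅a, ⁅b, c⁆⁆) =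
            (⁅a, ⁅b, c⁆⁆ - ⁅b, ⁅a, c⁆⁆ + ⁅c, ⁅a, b⁆⁆) +
              (⁅a, ⁅b, c⁆⁆ - ⁅b, ⁅a, c⁆⁆ + ⁅c, ⁅a, b⁆⁆) from by abel,
          hPQR, add_zero]
      rw [← f_add, ← f_add, hjac, f_zero]
    have e1 : f ⁅⁅b, c⁆, a⁆ = f ⁅⁅a, b⁆, c⁆ := by
      rw [A b c a, B b a c, neg_neg]
    have e2 : f ⁅⁅c, a⁆, b⁆ = f ⁅⁅a, b⁆, c⁆ := by
      rw [A c a b, B c b a, neg_neg]; exact e1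
    rw [e1, e2] at J0
    -- so `3 • f ⁅⁅a,b⁆,c⁆ = 0` and `3 ≠ 0` in `F`
    have h3 : (3 : F) • f ⁅⁅a, b⁆, c⁆ = 0 := by
      have : (3 : F) = 1 + 1 + 1 := by norm_num
      rw [this, add_smul, add_smul, one_smul]
      exact J0
    rcases smul_eq_zero.mp h3 with h | h
    · exact absurd h three_ne
    · exact h
  -- `γ₃ ≤ JnAux 9`
  have key' : ∀ a b c : L, ⁅⁅a, b⁆, c⁆ ∈ JnAux F L 9 := by
    intro a b c
    exact fun x₁ x₂ x₃ x₄ x₅ x₆ x₇ x₈ x₉ =>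
      (LieSubmodule.mem_bot _).mpr (key a b c x₁ x₂ x₃ x₄ x₅ x₆ x₇ x₈ x₉)
  have h2 : LieModule.lowerCentralSeries F L L 2 ≤ JnAux F L 9 := by
    rw [show (2 : ℕ) = 1 + 1 from rfl, LieModule.lowerCentralSeries_succ,
      LieSubmodule.lie_le_iff]
    intro x _ m hm
    rw [LieModule.lowerCentralSeries_succ, LieModule.lowerCentralSeries_zero] at hm
    have hm2 : m ∈ Submodule.span F
        {w : L | ∃ y ∈ (⊤ : LieIdeal F L), ∃ z ∈ (⊤ : LieSubmodule F L L), ⁅y, z⁆ = w} := by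
      rw [← LieSubmodule.lieIdeal_oper_eq_linear_span']
      exact hm
    refine Submodule.span_induction ?_ ?_ ?_ ?_ hm2
    · rintro w ⟨y, -, z, -, rfl⟩
      rw [neg_eq_iff_eq_neg.mp (lie_skew ⁅y, z⁆ x)]
      exact neg_mem (key' y z x)
    · rw [lie_zero]; exact zero_mem _
    · intro u v _ _ hu hv; rw [lie_add]; exact add_mem hu hv
    · intro t u _ hu; rw [lie_smul]; exact Submodule.smul_mem _ _ hu
  -- descend the lower central series
  have hk : ∀ k : ℕ, k ≤ 9 → LieModule.lowerCentralSeries F L L (2 + k) ≤ JnAux F L (9 - k) := by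
    intro k
    induction k with
    | zero => intro _; exact h2
    | succ k ih =>
      intro hk9
      have hk9' : k ≤ 9 := by omega
      have h99 : 9 - k = (9 - (k + 1)) + 1 := by omega
      have : LieModule.lowerCentralSeries F L L (2 + (k + 1)) =
          ⁅(⊤ : LieIdeal F L), LieModule.lowerCentralSeries F L L (2 + k)⁆ := by
        rw [show 2 + (k + 1) = (2 + k) + 1 from rfl, LieModule.lowerCentralSeries_succ]
      rw [this]
      calc ⁅(⊤ : LieIdeal F L), LieModule.lowerCentralSeries F L L (2 + k)⁆
          ≤ ⁅(⊤ : LieIdeal F L), JnAux F L (9 - k)⁆ :=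
            LieSubmodule.mono_lie_right _ (ih hk9')
        _ ≤ JnAux F L (9 - (k + 1)) := by rw [h99]; exact lie_top_JnAux_le _
  have hfin : LieModule.lowerCentralSeries F L L (2 + 9) ≤ JnAux F L (9 - 9) := hk 9 le_rfl
  exact le_bot_iff.mp hfin
end

section
/- Every Young diagram with 12 cells can be subdivided into at most 4 disjoint horizontal and vertical strips: for every Young diagram λ with exactly 12 cells, there exists a partition of the set of cells of λ into at most 4 blocks such that each block is contained in a single row of λ or in a single column of λ. -/
/-- Every Young diagram with 12 cells can be subdivided into at most 4 disjoint horizontal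
and vertical strips: there is an assignment of the cells to (at most) 4 blocks such that
each block lies in a single row or in a single column. -/
theorem youngDiagram_twelve_cells_strip_decomposition
    (μ : YoungDiagram) (h : μ.cells.card = 12) :
    ∃ f : ℕ × ℕ → Fin 4, ∀ k : Fin 4,
      (∃ i : ℕ, ∀ c ∈ μ.cells, f c = k → c.1 = i) ∨
      (∃ j : ℕ, ∀ c ∈ μ.cells, f c = k → c.2 = j) := by
  by_cases hA : ∀ c ∈ μ.cells, c.1 ≤ 3
  · refine ⟨fun c => ⟨min c.1 3, by omega⟩, fun k => ?_⟩
    left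
    refine ⟨k, fun c hc hfc => ?_⟩
    have h1 := hA c hc
    have h2 : min c.1 3 = (k : ℕ) := congrArg Fin.val hfc
    omega
  by_cases hB : ∀ c ∈ μ.cells, c.2 ≤ 3
  · refine ⟨fun c => ⟨min c.2 3, by omega⟩, fun k => ?_⟩
    right
    refine ⟨k, fun c hc hfc => ?_⟩
    have h1 := hB c hc
    have h2 : min c.2 3 = (k : ℕ) := congrArg Fin.val hfc
    omega
  -- there is a cell with row index ≥ 4 and a cell with column index ≥ 4
  push_neg at hA hB
  obtain ⟨a, ha, ha4⟩ := hA
  obtain ⟨b, hb, hb4⟩ := hB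
  have ha' : (a.1, a.2) ∈ μ := ha
  have hb' : (b.1, b.2) ∈ μ := hb
  have h40 : (4, 0) ∈ μ := μ.up_left_mem (show 4 ≤ a.1 by omega) (Nat.zero_le _) ha'
  have h04 : (0, 4) ∈ μ := μ.up_left_mem (Nat.zero_le _) (show 4 ≤ b.2 by omega) hb'
  -- (2,2) ∉ μ, otherwise μ has at least 13 cells
  have h22 : (2, 2) ∉ μ := by
    intro hmem
    have hsub : ({(0,0),(0,1),(0,2),(0,3),(0,4),(1,0),(2,0),(3,0),(4,0),
        (1,1),(1,2),(2,1),(2,2)} : Finset (ℕ × ℕ)) ⊆ μ.cells := by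
      intro c hc
      simp only [Finset.mem_insert, Finset.mem_singleton] at hc
      rcases hc with h'|h'|h'|h'|h'|h'|h'|h'|h'|h'|h'|h'|h' <;> subst h' <;>
        first
          | exact μ.up_left_mem (by omega) (by omega) h04
          | exact μ.up_left_mem (by omega) (by omega) h40
          | exact μ.up_left_mem (by omega) (by omega) hmem
    have hcard : (13 : ℕ) ≤ μ.cells.card := by
      calc (13 : ℕ) = ({(0,0),(0,1),(0,2),(0,3),(0,4),(1,0),(2,0),(3,0),(4,0),
          (1,1),(1,2),(2,1),(2,2)} : Finset (ℕ × ℕ)).card := by decide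
        _ ≤ μ.cells.card := Finset.card_le_card hsub
    omega
  refine ⟨fun c => if c.1 = 0 then 0 else if c.2 = 0 then 1 else if c.1 = 1 then 2 else 3,
    fun k => ?_⟩
  fin_cases k
  · left; refine ⟨0, fun c hc hfc => ?_⟩
    by_contra hne
    dsimp only at hfc
    split_ifs at hfc <;> simp_all
  · right; refine ⟨0, fun c hc hfc => ?_⟩
    by_contra hne
    dsimp only at hfc
    split_ifs at hfc <;> simp_all
  · left; refine ⟨1, fun c hc hfc => ?_⟩
    by_contra hne
    dsimp only at hfc
    split_ifs at hfc <;> simp_all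
  · right; refine ⟨1, fun c hc hfc => ?_⟩
    dsimp only at hfc
    split_ifs at hfc with h1 h2 h3
    · simp at hfc
    · simp at hfc
    · simp at hfc
    · -- c.1 ≥ 2, c.2 ≥ 1; if c.2 ≥ 2 then (2,2) ∈ μ, contradiction
      by_contra hne
      have : (2, 2) ∈ μ := μ.up_left_mem (by omega) (by omega) (show (c.1, c.2) ∈ μ from hc)
      exact h22 this
end
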